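/- arXiv:2212.10641 — 7 statements merged into one kernel-verified Lean document; each statement's English description precedes it below -/
import Mathlib

section
/- Every finite simple graph G = (V, E) contains an independent set I with |I| ≥ Σ_{x ∈ V} 1/(deg(x) + 1), where deg(x) is the degree of x in G. -/
/-! Greedy minimum-degree argument: put a vertex `v` of minimum degree into the independent set
and delete its closed neighbourhood `N[v]`. Each of the `deg v + 1` vertices of `N[v]` has degree
at least `deg v`, so they carry total weight `∑ 1/(deg + 1)` at most `1`, while deleting vertices
only lowers the degrees, hence raises the weights, of the vertices that remain. -/

open Finset

namespace SimpleGraph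

variable {V : Type*} (G : SimpleGraph V) [DecidableRel G.Adj]

/-- The degree of `v` in the subgraph induced on `S`, when `v ∈ S`. -/
def degreeOn (S : Finset V) (v : V) : ℕ := #{w ∈ S | G.Adj v w}

lemma degreeOn_mono {S T : Finset V} (h : S ⊆ T) (v : V) : G.degreeOn S v ≤ G.degreeOn T v :=
  card_le_card (filter_subset_filter _ h)

lemma degreeOn_univ [Fintype V] (v : V) : G.degreeOn univ v = G.degree v := by
  simp [degreeOn, ← card_neighborFinset_eq_degree, neighborFinset_eq_filter]

lemma sum_one_div_degreeOn_le_of_subset {S T : Finset V} (h : T ⊆ S) :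
    ∑ v ∈ T, (1 : ℝ) / (G.degreeOn S v + 1) ≤ ∑ v ∈ T, (1 : ℝ) / (G.degreeOn T v + 1) :=
  sum_le_sum fun v _ ↦ one_div_le_one_div_of_le (by positivity) (by
    exact_mod_cast Nat.add_le_add_right (G.degreeOn_mono h v) 1)

variable [DecidableEq V]

lemma card_insert_filter_adj (S : Finset V) (v : V) :
    #(insert v {w ∈ S | G.Adj v w}) = G.degreeOn S v + 1 :=
  card_insert_of_notMem (by simp)

lemma sum_one_div_degreeOn_closedNbhd_le_one {S : Finset V} {v : V}
    (hmin : ∀ w ∈ S, G.degreeOn S v ≤ G.degreeOn S w) :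
    ∑ w ∈ insert v {w ∈ S | G.Adj v w}, (1 : ℝ) / (G.degreeOn S w + 1) ≤ 1 := by
  have hle : ∀ w ∈ insert v {w ∈ S | G.Adj v w}, G.degreeOn S v ≤ G.degreeOn S w := by
    simp only [mem_insert, mem_filter]
    rintro w (rfl | ⟨hw, -⟩)
    exacts [le_rfl, hmin w hw]
  calc ∑ w ∈ insert v {w ∈ S | G.Adj v w}, (1 : ℝ) / (G.degreeOn S w + 1)
      ≤ ∑ _w ∈ insert v {w ∈ S | G.Adj v w}, (1 : ℝ) / (G.degreeOn S v + 1) :=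
        sum_le_sum fun w hw ↦ one_div_le_one_div_of_le (by positivity) (by
          exact_mod_cast Nat.add_le_add_right (hle w hw) 1)
    _ = 1 := by
        rw [sum_const, card_insert_filter_adj, nsmul_eq_mul]
        push_cast
        field_simp

lemma exists_isIndepSet_subset_sum_one_div_degreeOn_le (S : Finset V) :
    ∃ I ⊆ S, G.IsIndepSet (I : Set V) ∧
      ∑ v ∈ S, (1 : ℝ) / (G.degreeOn S v + 1) ≤ #I := by
  induction S using Finset.strongInduction with
  | _ S ih =>
  obtain rfl | hS := S.eq_empty_or_nonempty
  · exact ⟨∅, by simp⟩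
  obtain ⟨v, hv, hmin⟩ := S.exists_min_image (G.degreeOn S) hS
  set N := insert v {w ∈ S | G.Adj v w}
  have hNS : N ⊆ S := insert_subset hv (filter_subset _ _)
  obtain ⟨I, hIS, hI, hsum⟩ := ih (S \ N) (sdiff_ssubset hNS (insert_nonempty _ _))
  have hvI : v ∉ I := fun h ↦ (mem_sdiff.1 (hIS h)).2 (mem_insert_self _ _)
  refine ⟨insert v I, insert_subset hv (hIS.trans sdiff_subset), ?_, ?_⟩
  · have hvw : ∀ w ∈ I, ¬ G.Adj v w := fun w hw hvw ↦
      (mem_sdiff.1 (hIS hw)).2 (mem_insert_of_mem (mem_filter.2 ⟨(mem_sdiff.1 (hIS hw)).1, hvw⟩))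
    rw [coe_insert, isIndepSet_iff, Set.pairwise_insert]
    exact ⟨hI, fun w hw _ ↦ ⟨hvw w hw, fun hwv ↦ hvw w hw hwv.symm⟩⟩
  · rw [card_insert_of_notMem hvI, Nat.cast_succ, ← sum_sdiff hNS]
    linarith [G.sum_one_div_degreeOn_le_of_subset (T := S \ N) sdiff_subset,
      G.sum_one_div_degreeOn_closedNbhd_le_one hmin]

end SimpleGraph

/-- **Caro–Wei bound.** Every finite simple graph `G` contains an independent set `I`
with `|I| ≥ ∑_{x ∈ V} 1/(deg(x) + 1)`. -/
theorem caro_wei_independent_set {V : Type*} [Fintype V] [DecidableEq V]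
    (G : SimpleGraph V) [DecidableRel G.Adj] :
    ∃ I : Finset V, (∀ u ∈ I, ∀ v ∈ I, ¬ G.Adj u v) ∧
      ∑ x : V, (1 : ℝ) / (G.degree x + 1) ≤ I.card := by
  obtain ⟨I, -, hI, hsum⟩ := G.exists_isIndepSet_subset_sum_one_div_degreeOn_le univ
  refine ⟨I, fun u hu v hv ↦ ?_, by simpa only [G.degreeOn_univ] using hsum⟩
  obtain rfl | huv := eq_or_ne u v
  · exact G.loopless.irrefl u
  · exact hI hu hv huv
end

section
/- Let X₁, …, X_k be {0,1}-valued random variables on a probability space and let c ∈ [0,1] be a real number such that for every i ∈ [k], the conditional expectation E[X_i ∣ σ(X₁, …, X_{i−1})] ≤ c almost surely. Then for every real t ≥ 3, Pr[Σ_{i ∈ [k]} X_i ≥ (1 + t)·k·c] ≤ 2^{−t·k·c}. -/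
/-!
Exponential moment method with the weight `4 ^ Xᵢ = 1 + 3 Xᵢ` (valid since `Xᵢ ∈ {0,1}`).
Conditioning on the past and pulling out the bounded past product gives
`E[∏_{j ≤ i} (1 + 3 Xⱼ)] ≤ (1 + 3c) E[∏_{j < i} (1 + 3 Xⱼ)]`,
hence `E[4 ^ ∑ Xᵢ] ≤ (1 + 3c) ^ k ≤ e ^ {3kc}`.
Markov's inequality at level `4 ^ {(1+t)kc}` then gives the bound `e ^ {(3 - (2 + 2t) log 2) kc}`,
which is at most `2 ^ {-tkc}` because `3 ≤ (2 + t) log 2` once `t ≥ 3`.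
-/

open MeasureTheory ProbabilityTheory Finset Real

section ConditionalProducts

variable {Ω : Type*} {mΩ : MeasurableSpace Ω} {μ : Measure Ω}

theorem integral_mul_le_of_condExp_le [IsFiniteMeasure μ] {m : MeasurableSpace Ω} (hm : m ≤ mΩ)
    {f g : Ω → ℝ} {C r : ℝ} (hf : StronglyMeasurable[m] f) (hf0 : ∀ ω, 0 ≤ f ω)
    (hfC : ∀ ω, f ω ≤ C) (hg : Integrable g μ) (hgr : μ[g | m] ≤ᵐ[μ] fun _ => r) :
    ∫ ω, f ω * g ω ∂μ ≤ r * ∫ ω, f ω ∂μ := by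
  have hf_norm : ∀ ω, ‖f ω‖ ≤ C := fun ω => (norm_of_nonneg (hf0 ω)).trans_le (hfC ω)
  have hf_int : Integrable f μ :=
    .of_bound (hf.mono hm).aestronglyMeasurable C (ae_of_all _ hf_norm)
  calc ∫ ω, f ω * g ω ∂μ = ∫ ω, (μ[f * g | m]) ω ∂μ := (integral_condExp hm).symm
    _ = ∫ ω, f ω * (μ[g | m]) ω ∂μ :=
        integral_congr_ae (condExp_stronglyMeasurable_mul_of_bound hm hf hg C (ae_of_all _ hf_norm))
    _ ≤ ∫ ω, f ω * r ∂μ := by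
        refine integral_mono_ae (integrable_condExp.bdd_mul (hf.mono hm).aestronglyMeasurable
          (ae_of_all _ hf_norm)) (hf_int.mul_const r) ?_
        filter_upwards [hgr] with ω hω using mul_le_mul_of_nonneg_left hω (hf0 ω)
    _ = r * ∫ ω, f ω ∂μ := by rw [integral_mul_const, mul_comm]

theorem integral_prod_le_pow_of_condExp_le [IsProbabilityMeasure μ] {ι : Type*} [LinearOrder ι]
    {m : ι → MeasurableSpace Ω} (hm : ∀ i, m i ≤ mΩ) {Z : ι → Ω → ℝ} {B r : ℝ}
    (hZ : ∀ i, Measurable (Z i)) (hZm : ∀ i j, j < i → Measurable[m i] (Z j))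
    (hZ0 : ∀ i ω, 0 ≤ Z i ω) (hZB : ∀ i ω, Z i ω ≤ B) (hr : 0 ≤ r)
    (hcond : ∀ i, μ[Z i | m i] ≤ᵐ[μ] fun _ => r) (s : Finset ι) :
    ∫ ω, ∏ i ∈ s, Z i ω ∂μ ≤ r ^ #s := by
  classical
  induction s using Finset.induction_on_max with
  | empty => simp
  | insert a s hlt ih =>
    have ha : a ∉ s := fun h => lt_irrefl a (hlt a h)
    have hZ_norm : ∀ ω, ‖Z a ω‖ ≤ B := fun ω => (norm_of_nonneg (hZ0 a ω)).trans_le (hZB a ω)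
    have hpast : StronglyMeasurable[m a] fun ω => ∏ i ∈ s, Z i ω :=
      (Finset.measurable_prod s fun i hi => hZm a i (hlt i hi)).stronglyMeasurable
    calc ∫ ω, ∏ i ∈ insert a s, Z i ω ∂μ = ∫ ω, (∏ i ∈ s, Z i ω) * Z a ω ∂μ := by
          simp_rw [prod_insert ha, mul_comm]
      _ ≤ r * ∫ ω, ∏ i ∈ s, Z i ω ∂μ :=
          integral_mul_le_of_condExp_le (hm a) hpast (fun ω => prod_nonneg fun i _ => hZ0 i ω)
            (fun ω => (prod_le_prod (fun i _ => hZ0 i ω) fun i _ => hZB i ω).trans_eq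
              (prod_const B))
            (.of_bound (hZ a).aestronglyMeasurable B (ae_of_all _ hZ_norm)) (hcond a)
      _ ≤ r * r ^ #s := by gcongr
      _ = r ^ #(insert a s) := by rw [card_insert_of_notMem ha, pow_succ']

theorem condExp_const_add_const_mul_le [IsFiniteMeasure μ] {m : MeasurableSpace Ω} (hm : m ≤ mΩ)
    {X : Ω → ℝ} (hX : Integrable X μ) {a b c : ℝ} (ha : 0 ≤ a)
    (hXc : μ[X | m] ≤ᵐ[μ] fun _ => c) :
    μ[fun ω => b + a * X ω | m] ≤ᵐ[μ] fun _ => b + a * c := by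
  have hsplit := condExp_add (m := m) (integrable_const b) (hX.smul a)
  have hsmul := condExp_smul (m := m) (μ := μ) a X
  filter_upwards [hsplit, hsmul, hXc] with ω h_add h_smul hω
  change μ[(fun _ => b) + a • X | m] ω ≤ b + a * c
  rw [h_add, Pi.add_apply, condExp_const hm, h_smul, Pi.smul_apply, smul_eq_mul]
  gcongr

end ConditionalProducts

theorem exp_log_four_mul_of_zero_or_one {x : ℝ} (hx : x = 0 ∨ x = 1) :
    exp (log 4 * x) = 1 + 3 * x := by
  rcases hx with rfl | rfl <;> norm_num [exp_log]

theorem mgf_sum_log_four {Ω ι : Type*} {mΩ : MeasurableSpace Ω} {μ : Measure Ω} [Fintype ι]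
    {X : ι → Ω → ℝ} (hX : ∀ i ω, X i ω = 0 ∨ X i ω = 1) :
    mgf (fun ω => ∑ i, X i ω) μ (log 4) = ∫ ω, ∏ i, (1 + 3 * X i ω) ∂μ := by
  refine integral_congr_ae (ae_of_all _ fun ω => ?_)
  simp only [mul_sum, exp_sum]
  exact prod_congr rfl fun i _ => exp_log_four_mul_of_zero_or_one (hX i ω)

theorem exp_neg_log_four_mul_mul_one_add_pow_le {c t : ℝ} (k : ℕ) (hc : 0 ≤ c) (ht : 3 ≤ t) :
    exp (-log 4 * ((1 + t) * k * c)) * (1 + 3 * c) ^ k ≤ (2 : ℝ) ^ (-(t * k * c)) := by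
  have hkc : 0 ≤ (k : ℝ) * c := by positivity
  have hpow : (1 + 3 * c) ^ k ≤ exp (3 * (k * c)) := by
    calc (1 + 3 * c) ^ k ≤ exp (3 * c) ^ k := by
          gcongr
          linarith [add_one_le_exp (3 * c)]
      _ = exp (3 * (k * c)) := by rw [← exp_nat_mul]; ring_nf
  have hlog4 : log 4 = 2 * log 2 := by
    rw [show (4 : ℝ) = 2 ^ 2 by norm_num, log_pow]; norm_num
  have hlog2 : 3 ≤ (2 + t) * log 2 := by nlinarith [log_two_gt_d9]
  calc exp (-log 4 * ((1 + t) * k * c)) * (1 + 3 * c) ^ k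
      ≤ exp (-log 4 * ((1 + t) * k * c)) * exp (3 * (k * c)) := by gcongr
    _ ≤ exp (log 2 * -(t * k * c)) := by
        rw [← exp_add, hlog4]
        gcongr
        nlinarith
    _ = (2 : ℝ) ^ (-(t * k * c)) := by rw [rpow_def_of_pos two_pos]

section PastSigmaAlgebra

variable {Ω ι β : Type*} {mΩ : MeasurableSpace Ω} [LT ι] [MeasurableSpace β] {X : ι → Ω → β}

theorem iSup_comap_lt_le (hX : ∀ i, Measurable (X i)) (i : ι) :
    ⨆ j, ⨆ _ : j < i, MeasurableSpace.comap (X j) inferInstance ≤ mΩ :=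
  iSup₂_le fun j _ => (hX j).comap_le

theorem measurable_iSup_comap_lt {i j : ι} (hj : j < i) :
    Measurable[⨆ j, ⨆ _ : j < i, MeasurableSpace.comap (X j) inferInstance] (X j) :=
  (comap_measurable (X j)).mono (le_iSup₂_of_le j hj le_rfl) le_rfl

end PastSigmaAlgebra

theorem chernoff_azuma_mix_general {Ω : Type*} [MeasurableSpace Ω] (μ : Measure Ω)
    [IsProbabilityMeasure μ] (k : ℕ) (X : Fin k → Ω → ℝ)
    (hmeas : ∀ i, Measurable (X i))
    (hval : ∀ i ω, X i ω = 0 ∨ X i ω = 1)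
    (c : ℝ) (hc0 : 0 ≤ c)
    (hcond : ∀ i : Fin k, ∀ᵐ ω ∂μ,
      (μ[X i | ⨆ j : Fin k, ⨆ _ : j < i, MeasurableSpace.comap (X j) inferInstance]) ω ≤ c)
    (t : ℝ) (ht : 3 ≤ t) :
    μ {ω | (1 + t) * k * c ≤ ∑ i, X i ω} ≤ ENNReal.ofReal ((2 : ℝ) ^ (-(t * k * c))) := by
  have hX : ∀ i ω, X i ω ∈ Set.Icc (0 : ℝ) 1 := fun i ω => by
    rcases hval i ω with h | h <;> simp [h]
  have hprod : ∫ ω, ∏ i, (1 + 3 * X i ω) ∂μ ≤ (1 + 3 * c) ^ k := by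
    simpa using integral_prod_le_pow_of_condExp_le (iSup_comap_lt_le hmeas)
      (Z := fun i ω => 1 + 3 * X i ω) (B := 4) (fun i => by fun_prop)
      (fun i j hj => by have := measurable_iSup_comap_lt (X := X) hj; fun_prop)
      (fun i ω => by linarith [(hX i ω).1]) (fun i ω => by linarith [(hX i ω).2]) (by positivity)
      (fun i => condExp_const_add_const_mul_le (iSup_comap_lt_le hmeas i)
        (.of_mem_Icc 0 1 (hmeas i).aemeasurable (ae_of_all _ (hX i))) (by norm_num) (hcond i))
      univ
  have hint : Integrable (fun ω => exp (log 4 * ∑ i, X i ω)) μ :=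
    integrable_exp_mul_of_le _ k (log_nonneg (by norm_num)) (by fun_prop)
      (ae_of_all _ fun ω => by simpa using sum_le_sum fun i (_ : i ∈ univ) => (hX i ω).2)
  calc μ {ω | (1 + t) * k * c ≤ ∑ i, X i ω}
      = ENNReal.ofReal (μ.real {ω | (1 + t) * k * c ≤ ∑ i, X i ω}) := (ofReal_measureReal).symm
    _ ≤ ENNReal.ofReal (exp (-log 4 * ((1 + t) * k * c)) * (1 + 3 * c) ^ k) := by
        gcongr
        refine (measure_ge_le_exp_mul_mgf _ (log_nonneg (by norm_num)) hint).trans ?_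
        rw [mgf_sum_log_four hval]
        gcongr
    _ ≤ ENNReal.ofReal ((2 : ℝ) ^ (-(t * k * c))) :=
        ENNReal.ofReal_le_ofReal (exp_neg_log_four_mul_mul_one_add_pow_le k hc0 ht)

/-- **Mix of Chernoff bound and Azuma's inequality** (Lemma 2.2): if `X₁, …, X_k` are
`{0,1}`-valued random variables with `E[Xᵢ ∣ σ(X₁,…,X_{i-1})] ≤ c` a.s. for some `c ∈ [0,1]`,
then for all `t ≥ 3`, `Pr[∑ Xᵢ ≥ (1+t)·k·c] ≤ 2^{-t·k·c}`. -/
theorem chernoff_azuma_mix {Ω : Type*} [MeasurableSpace Ω] (μ : Measure Ω)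
    [IsProbabilityMeasure μ] (k : ℕ) (X : Fin k → Ω → ℝ)
    (hmeas : ∀ i, Measurable (X i))
    (hval : ∀ i ω, X i ω = 0 ∨ X i ω = 1)
    (c : ℝ) (hc0 : 0 ≤ c) (hc1 : c ≤ 1)
    (hcond : ∀ i : Fin k, ∀ᵐ ω ∂μ,
      (μ[X i | ⨆ j : Fin k, ⨆ _ : j < i, MeasurableSpace.comap (X j) inferInstance]) ω ≤ c)
    (t : ℝ) (ht : 3 ≤ t) :
    μ {ω | (1 + t) * k * c ≤ ∑ i, X i ω} ≤ ENNReal.ofReal ((2 : ℝ) ^ (-(t * k * c))) :=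
  chernoff_azuma_mix_general μ k X hmeas hval c hc0 hcond t ht
end

section
/- Let n ≥ 2 be an integer, U a finite set with |U| ≤ n, k a positive integer, and p an integer with p ≥ 8·n·log₂ n. Let w : U × {0,1}^k → ℝ be nonnegative weights such that for every x ∈ U, Σ_{j ∈ {0,1}^k} w(x,j) = 1 and every nonzero value w(x,j) satisfies w(x,j) ≥ 1/n. Then there exists a function g : U × [p] → {0,1}^k such that for every x ∈ U and every j ∈ {0,1}^k, |{r ∈ [p] : g(x,r) = j}| / p ≤ w(x,j)·(1 + 1/(8·log₂ n)). -/
/-!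
Each `x` is handled separately. Rounding every target count `w(x,j)·p` up gives counts
`⌈w(x,j)·p⌉` whose sum is at least `p`, so `[p]` embeds into the disjoint union of blocks of
these sizes and `g(x,·)` can send `r` to the label of its block. A zero weight gets an empty
block, and a nonzero weight is at least `1/n`, so the rounding error `1` is at most
`w(x,j)·p/(8·log₂ n)` because `p ≥ 8·n·log₂ n`.
-/

open Finset

lemma exists_fin_fun_card_fiber_le {J : Type*} [Fintype J] [DecidableEq J] (b : J → ℕ) {p : ℕ}
    (hp : p ≤ ∑ j, b j) :
    ∃ g : Fin p → J, ∀ j, #{r | g r = j} ≤ b j := by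
  obtain ⟨e⟩ : Nonempty (Fin p ↪ Σ j, Fin (b j)) :=
    Function.Embedding.nonempty_of_card_le (by simpa using hp)
  refine ⟨fun r => (e r).1, fun j => ?_⟩
  let fiberEmb : {r : Fin p // (e r).1 = j} → Fin (b j) :=
    fun r => Equiv.sigmaSubtype j ⟨e r, r.2⟩
  have hinj : Function.Injective fiberEmb := fun r s h => by
    simpa [fiberEmb, Subtype.ext_iff] using (Equiv.sigmaSubtype j).injective h
  simpa [Fintype.card_subtype] using Fintype.card_le_of_injective fiberEmb hinj

lemma le_sum_natCeil_mul {J : Type*} [Fintype J] (w : J → ℝ) (hw1 : ∑ j, w j = 1) (p : ℕ) :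
    p ≤ ∑ j, ⌈w j * p⌉₊ := by
  have : (p : ℝ) ≤ ∑ j, (⌈w j * p⌉₊ : ℝ) :=
    calc (p : ℝ) = ∑ j, w j * p := by rw [← Finset.sum_mul, hw1, one_mul]
      _ ≤ ∑ j, (⌈w j * p⌉₊ : ℝ) := Finset.sum_le_sum fun j _ => Nat.le_ceil _
  exact_mod_cast this

lemma natCeil_mul_div_le_mul_one_add {w ε : ℝ} {p : ℕ} (hw0 : 0 ≤ w)
    (hw : w ≠ 0 → 1 ≤ w * ε * p) :
    (⌈w * p⌉₊ : ℝ) / p ≤ w * (1 + ε) := by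
  rcases hw0.eq_or_lt with rfl | hwpos
  · simp
  have hp : (0 : ℝ) < p := by
    rcases Nat.eq_zero_or_pos p with rfl | hp
    · exact absurd (hw hwpos.ne') (by simp)
    · exact_mod_cast hp
  rw [div_le_iff₀ hp]
  nlinarith [Nat.ceil_lt_add_one (mul_nonneg hw0 hp.le), hw hwpos.ne']

lemma exists_fin_fun_card_fiber_div_le {J : Type*} [Fintype J] [DecidableEq J] (w : J → ℝ)
    (ε : ℝ) (p : ℕ) (hw0 : ∀ j, 0 ≤ w j) (hw1 : ∑ j, w j = 1)
    (hw : ∀ j, w j ≠ 0 → 1 ≤ w j * ε * p) :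
    ∃ g : Fin p → J, ∀ j, (#{r | g r = j} : ℝ) / p ≤ w j * (1 + ε) := by
  obtain ⟨g, hg⟩ := exists_fin_fun_card_fiber_le _ (le_sum_natCeil_mul w hw1 p)
  refine ⟨g, fun j => le_trans ?_ (natCeil_mul_div_le_mul_one_add (hw0 j) (hw j))⟩
  gcongr
  exact_mod_cast hg j

lemma one_le_mul_one_div_mul {n L w p : ℝ} (hn : 0 < n) (hL : 0 < L) (hw : 1 / n ≤ w)
    (hp : 8 * n * L ≤ p) :
    1 ≤ w * (1 / (8 * L)) * p :=
  have : 0 < w := lt_of_lt_of_le (by positivity) hw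
  calc (1 : ℝ) = 1 / n * (1 / (8 * L)) * (8 * n * L) := by field_simp
    _ ≤ w * (1 / (8 * L)) * p := by gcongr

theorem gw_function_exists_general (n : ℕ) (hn : 2 ≤ n) {U : Type*} [Fintype U]
    (k : ℕ) (p : ℕ)
    (hp : 8 * (n : ℝ) * Real.logb 2 n ≤ p)
    (w : U → (Fin k → Bool) → ℝ)
    (hw0 : ∀ x j, 0 ≤ w x j)
    (hw1 : ∀ x, ∑ j, w x j = 1)
    (hwlb : ∀ x j, w x j ≠ 0 → 1 / (n : ℝ) ≤ w x j) :
    ∃ g : U → Fin p → (Fin k → Bool), ∀ x j,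
      ((Finset.univ.filter fun r => g x r = j).card : ℝ) / p ≤
        w x j * (1 + 1 / (8 * Real.logb 2 n)) := by
  have hn0 : (0 : ℝ) < n := by positivity
  have hL : 0 < Real.logb 2 n := Real.logb_pos one_lt_two (by exact_mod_cast hn)
  choose g hg using fun x => exists_fin_fun_card_fiber_div_le (w x) _ p (hw0 x) (hw1 x)
    fun j hj => one_le_mul_one_div_mul hn0 hL (hwlb x j hj) hp
  exact ⟨g, hg⟩

/-- Lemma 3.2 of the paper: for `p ≥ 8·n·log₂ n` and normalized weights `w(x,·)` on `{0,1}^k`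
(each nonzero weight being `≥ 1/n`), there is `g : U × [p] → {0,1}^k` with
`|g⁻¹(x,j)|/p ≤ w(x,j)·(1 + 1/(8·log₂ n))` for all `x, j`. -/
theorem gw_function_exists (n : ℕ) (hn : 2 ≤ n) {U : Type*} [Fintype U]
    (hU : Fintype.card U ≤ n) (k : ℕ) (hk : 0 < k) (p : ℕ)
    (hp : 8 * (n : ℝ) * Real.logb 2 n ≤ p)
    (w : U → (Fin k → Bool) → ℝ)
    (hw0 : ∀ x j, 0 ≤ w x j)
    (hw1 : ∀ x, ∑ j, w x j = 1)
    (hwlb : ∀ x j, w x j ≠ 0 → 1 / (n : ℝ) ≤ w x j) :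
    ∃ g : U → Fin p → (Fin k → Bool), ∀ x j,
      ((Finset.univ.filter fun r => g x r = j).card : ℝ) / p ≤
        w x j * (1 + 1 / (8 * Real.logb 2 n)) :=
  gw_function_exists_general n hn k p hp w hw0 hw1 hwlb
end

section
/- Let H be a 2-universal family of functions from a finite set C to [s], and let L ⊆ C be nonempty. Then (1/|H|) · Σ_{h ∈ H} max_{j ∈ [s]} (|L ∩ h^{−1}(j)| − 1) ≤ (|L| − 1) / √s. -/
/-!
Write `M h` for the largest fibre of `h` on `L`, minus one. A fibre of size `M h + 1` alone
contributes `M h (M h + 1)` ordered pairs of distinct points of `L` on which `h` collides, while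
2-universality bounds the average number of such pairs over `H` by `|L| (|L| - 1) / s`.
Jensen's inequality turns this into `E² + E ≤ |L| (|L| - 1) / s` for the mean `E` of `M`, and
this quadratic bound forces `E ≤ (|L| - 1) / √s` because `√s ≤ s`.
-/

open Finset

section Collisions

variable {α β : Type*} [DecidableEq β]

def collisionPairs (L : Finset α) (h : α → β) : Finset (α × α) :=
  L.offDiag.filter fun p => h p.1 = h p.2

theorem offDiag_filter_fiber_subset_collisionPairs (L : Finset α) (h : α → β) (j : β) :
    (L.filter fun c => h c = j).offDiag ⊆ collisionPairs L h := by
  intro p hp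
  simp only [mem_offDiag, mem_filter] at hp
  exact mem_filter.mpr ⟨mem_offDiag.mpr ⟨hp.1.1, hp.2.1.1, hp.2.2⟩, hp.1.2.trans hp.2.1.2.symm⟩

theorem card_fiber_mul_pred_le_card_collisionPairs (L : Finset α) (h : α → β) (j : β) :
    ((#(L.filter fun c => h c = j) : ℝ) - 1) * #(L.filter fun c => h c = j) ≤
      #(collisionPairs L h) := by
  set F := L.filter fun c => h c = j
  have hoff : (#F.offDiag : ℝ) = (#F - 1) * #F := by
    rw [offDiag_card, Nat.cast_sub (Nat.le_mul_self _), Nat.cast_mul]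
    ring
  rw [← hoff]
  exact_mod_cast card_le_card (offDiag_filter_fiber_subset_collisionPairs L h j)

theorem sq_add_self_iSup_fiber_le_card_collisionPairs [Finite β] [Nonempty β]
    (L : Finset α) (h : α → β) :
    (⨆ j, ((#(L.filter fun c => h c = j) : ℝ) - 1)) ^ 2 +
        ⨆ j, ((#(L.filter fun c => h c = j) : ℝ) - 1) ≤
      #(collisionPairs L h) := by
  obtain ⟨j, hj⟩ := exists_eq_ciSup_of_finite
    (f := fun j => ((#(L.filter fun c => h c = j) : ℝ) - 1))
  rw [← hj]
  linarith [card_fiber_mul_pred_le_card_collisionPairs L h j]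

theorem sum_card_collisionPairs (H : Finset (α → β)) (L : Finset α) :
    ∑ h ∈ H, #(collisionPairs L h) = ∑ p ∈ L.offDiag, #(H.filter fun h => h p.1 = h p.2) := by
  simp only [collisionPairs, card_filter]
  exact sum_comm

theorem sum_card_collisionPairs_div_le {H : Finset (α → β)} {ε : ℝ}
    (huniv : ∀ a b : α, a ≠ b → (#(H.filter fun h => h a = h b) : ℝ) / #H ≤ ε)
    (L : Finset α) :
    (∑ h ∈ H, (#(collisionPairs L h) : ℝ)) / #H ≤ #L * (#L - 1) * ε := by
  have hoff : (#L.offDiag : ℝ) = #L * (#L - 1) := by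
    rw [offDiag_card, Nat.cast_sub (Nat.le_mul_self _), Nat.cast_mul]
    ring
  rw [← hoff, ← nsmul_eq_mul, ← Nat.cast_sum, sum_card_collisionPairs, Nat.cast_sum, sum_div]
  exact sum_le_card_nsmul _ _ _ fun p hp =>
    huniv p.1 p.2 (mem_offDiag.mp hp).2.2

end Collisions

theorem le_div_sqrt_of_sq_add_le {x ℓ s : ℝ} (hℓ : 1 ≤ ℓ) (hs : 1 ≤ s)
    (h : x ^ 2 + x ≤ ℓ * (ℓ - 1) * (1 / s)) : x ≤ (ℓ - 1) / √s := by
  set t := (ℓ - 1) / √s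
  have hs0 : 0 < s := by linarith
  have hsqrt : √s ≤ s := Real.sqrt_le_self_iff.mpr (Or.inr hs)
  have ht0 : 0 ≤ t := div_nonneg (by linarith) (Real.sqrt_nonneg s)
  have ht2 : t ^ 2 = (ℓ - 1) ^ 2 / s := by rw [div_pow, Real.sq_sqrt hs0.le]
  have ht : (ℓ - 1) / s ≤ t := div_le_div_of_nonneg_left (by linarith) (by positivity) hsqrt
  have hbound : ℓ * (ℓ - 1) * (1 / s) = (ℓ - 1) ^ 2 / s + (ℓ - 1) / s := by field_simp; ring
  by_contra! hx
  nlinarith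

theorem two_universal_max_bound_general {C : Type*}
    (s : ℕ) (hs : 0 < s) (H : Finset (C → Fin s))
    (huniv : ∀ a b : C, a ≠ b →
      ((H.filter fun h => h a = h b).card : ℝ) / H.card ≤ 1 / s)
    (L : Finset C) (hL : L.Nonempty) :
    (1 / (H.card : ℝ)) *
        ∑ h ∈ H, (⨆ j : Fin s, (((L.filter fun c => h c = j).card : ℝ) - 1))
      ≤ ((L.card : ℝ) - 1) / Real.sqrt s := by
  have : NeZero s := ⟨hs.ne'⟩
  set M : (C → Fin s) → ℝ := fun h => ⨆ j, ((#(L.filter fun c => h c = j) : ℝ) - 1)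
  have hjensen := sum_div_card_sq_le_sum_sq_div_card (s := H) (f := M)
  have hcollisions : (∑ h ∈ H, (M h ^ 2 + M h)) / #H ≤ #L * (#L - 1) * (1 / s) :=
    (div_le_div_of_nonneg_right (sum_le_sum fun h _ =>
      sq_add_self_iSup_fiber_le_card_collisionPairs L h) (Nat.cast_nonneg _)).trans
      (sum_card_collisionPairs_div_le huniv L)
  rw [sum_add_distrib, add_div] at hcollisions
  rw [one_div_mul_eq_div]
  refine le_div_sqrt_of_sq_add_le (by exact_mod_cast hL.card_pos) (by exact_mod_cast hs) ?_
  linarith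

/-- The expected-maximum bound inside the proof of Lemma 3.9: for a 2-universal family `H` of
functions `C → [s]` and any nonempty `L ⊆ C`,
`(1/|H|)·∑_{h ∈ H} max_{j ∈ [s]} (|L ∩ h⁻¹(j)| − 1) ≤ (|L| − 1)/√s`. -/
theorem two_universal_max_bound {C : Type*} [Fintype C] [DecidableEq C]
    (s : ℕ) (hs : 0 < s) (H : Finset (C → Fin s)) (hH : H.Nonempty)
    (huniv : ∀ a b : C, a ≠ b →
      ((H.filter fun h => h a = h b).card : ℝ) / H.card ≤ 1 / s)
    (L : Finset C) (hL : L.Nonempty) :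
    (1 / (H.card : ℝ)) *
        ∑ h ∈ H, (⨆ j : Fin s, (((L.filter fun c => h c = j).card : ℝ) - 1))
      ≤ ((L.card : ℝ) - 1) / Real.sqrt s :=
  two_universal_max_bound_general s hs H huniv L hL
end

section
/- Let G = (V, E) be a finite simple graph, J a finite index set, and a : V × J → ℝ nonnegative with A(x) := Σ_{j ∈ J} a(x,j) > 0 for every x ∈ V. Let (J_x)_{x ∈ V} be independent random variables with Pr[J_x = j] = a(x,j)/A(x). Then E[ Σ_{{u,v} ∈ E} 1_{J_u = J_v} · (1/a(u, J_u) + 1/a(v, J_v)) ] ≤ Σ_{{u,v} ∈ E} (1/A(u) + 1/A(v)). (Note that a(x, J_x) > 0 almost surely, so the summands are almost surely well defined.) -/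
/-!
By linearity it suffices to treat one edge `uv`. Since `J_u` and `J_v` are independent,
`Pr[J_u = J_v = j] = a(u,j) a(v,j) / (A(u) A(v))`, so the edge contributes
`∑_j a(u,j) a(v,j) (1/a(u,j) + 1/a(v,j)) / (A(u) A(v)) ≤ ∑_j (a(v,j) + a(u,j)) / (A(u) A(v))
= 1/A(u) + 1/A(v)`; the inequality is an equality except where some `a(·,j)` vanishes, in which
case `0 · 0⁻¹ = 0` makes the term smaller.
-/

open Finset

section Independence

variable {V J R : Type*} [Fintype V] [DecidableEq V] [Fintype J] [CommSemiring R]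

/-- Independence of the coordinates under the product weights `∏ x, p x (f x)`. -/
theorem sum_prod_mul_prod_eq_prod_sum_mul (p φ : V → J → R) (hp : ∀ x, ∑ j, p x j = 1)
    (s : Finset V) :
    ∑ f : V → J, (∏ x, p x (f x)) * ∏ x ∈ s, φ x (f x) = ∏ x ∈ s, ∑ j, p x j * φ x j := by
  calc ∑ f : V → J, (∏ x, p x (f x)) * ∏ x ∈ s, φ x (f x)
      = ∑ f : V → J, ∏ x, p x (f x) * (if x ∈ s then φ x (f x) else 1) := by
        refine sum_congr rfl fun f _ => ?_
        rw [prod_mul_distrib, Fintype.prod_ite_mem]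
    _ = ∏ x, ∑ j, p x j * (if x ∈ s then φ x j else 1) :=
        (Fintype.prod_sum (κ := fun _ => J) fun x j => p x j * if x ∈ s then φ x j else 1).symm
    _ = ∏ x, if x ∈ s then ∑ j, p x j * φ x j else 1 := by
        refine prod_congr rfl fun x _ => ?_
        split_ifs <;> simp [hp]
    _ = ∏ x ∈ s, ∑ j, p x j * φ x j := Fintype.prod_ite_mem s _

theorem sum_prod_mul_ite_apply_eq_apply_eq [DecidableEq J] (p : V → J → R)
    (hp : ∀ x, ∑ j, p x j = 1) {u v : V} (huv : u ≠ v) (j : J) :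
    ∑ f : V → J, (∏ x, p x (f x)) * ((if f u = j then 1 else 0) * (if f v = j then 1 else 0)) =
      p u j * p v j := by
  simpa [prod_pair huv] using
    sum_prod_mul_prod_eq_prod_sum_mul p (fun _ k => if k = j then (1 : R) else 0) hp {u, v}

end Independence

theorem mul_mul_inv_add_inv_le_add {x y : ℝ} (hx : 0 ≤ x) (hy : 0 ≤ y) :
    x * y * (x⁻¹ + y⁻¹) ≤ y + x := by
  have hxy : x * y * (x⁻¹ + y⁻¹) = x * x⁻¹ * y + y * y⁻¹ * x := by ring
  rw [hxy]
  exact add_le_add (mul_le_of_le_one_left hy mul_inv_le_one)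
    (mul_le_of_le_one_left hx mul_inv_le_one)

theorem sum_prod_mul_ite_eq_le {V J : Type*} [Fintype V] [DecidableEq V] [Fintype J]
    [DecidableEq J] (a : V → J → ℝ) (ha : ∀ x j, 0 ≤ a x j) (hA : ∀ x, 0 < ∑ j, a x j)
    {u v : V} (huv : u ≠ v) :
    ∑ f : V → J, (∏ x, a x (f x) / ∑ j, a x j) *
        (if f u = f v then 1 / a u (f u) + 1 / a v (f v) else 0)
      ≤ 1 / (∑ j, a u j) + 1 / (∑ j, a v j) := by
  set A : V → ℝ := fun x => ∑ j, a x j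
  have hp : ∀ x, ∑ j, a x j / A x = 1 := fun x => by rw [← sum_div, div_self (hA x).ne']
  have hdiag : ∀ f : V → J, (if f u = f v then 1 / a u (f u) + 1 / a v (f v) else 0) =
      ∑ j, ((if f u = j then 1 else 0) * (if f v = j then 1 else 0)) *
        ((a u j)⁻¹ + (a v j)⁻¹) := fun f => by
    by_cases h : f u = f v <;> simp [h]
  calc ∑ f : V → J, (∏ x, a x (f x) / A x) *
        (if f u = f v then 1 / a u (f u) + 1 / a v (f v) else 0)
      = ∑ j, (a u j / A u) * (a v j / A v) * ((a u j)⁻¹ + (a v j)⁻¹) := by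
        simp_rw [hdiag, mul_sum]
        rw [sum_comm]
        refine sum_congr rfl fun j _ => ?_
        rw [← sum_prod_mul_ite_apply_eq_apply_eq _ hp huv j, sum_mul]
        exact sum_congr rfl fun f _ => (mul_assoc _ _ _).symm
    _ = ∑ j, a u j * a v j * ((a u j)⁻¹ + (a v j)⁻¹) / (A u * A v) := by
        refine sum_congr rfl fun j _ => ?_
        field_simp
    _ ≤ ∑ j, (a v j + a u j) / (A u * A v) := by
        gcongr with j
        · exact (mul_pos (hA u) (hA v)).le
        · exact mul_mul_inv_add_inv_le_add (ha u j) (ha v j)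
    _ = 1 / A u + 1 / A v := by
        have hAu : A u ≠ 0 := (hA u).ne'
        have hAv : A v ≠ 0 := (hA v).ne'
        rw [← sum_div, sum_add_distrib]
        field_simp
        ring

/-- Equation (3.6) of the paper: if every vertex `x` independently samples an index `J_x ∈ J`
with probability `a(x,j)/A(x)` (where `A(x) = ∑_j a(x,j) > 0`), then the expectation of
`∑_{{u,v} ∈ E} 1_{J_u = J_v}·(1/a(u,J_u) + 1/a(v,J_v))` is at most
`∑_{{u,v} ∈ E} (1/A(u) + 1/A(v))`.  The expectation is written out explicitly as a sum over
all outcomes `f : V → J` weighted by `∏_x a(x, f x)/A(x)`. -/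
theorem expected_potential_refinement {V J : Type*} [Fintype V] [DecidableEq V]
    [Fintype J] [DecidableEq J] (G : SimpleGraph V) [DecidableRel G.Adj]
    (a : V → J → ℝ) (ha : ∀ x j, 0 ≤ a x j) (hA : ∀ x, 0 < ∑ j, a x j) :
    (∑ f : V → J, (∏ x, a x (f x) / ∑ j, a x j) *
        (∑ e ∈ G.edgeFinset, Sym2.lift
          ⟨fun u v => if f u = f v then 1 / a u (f u) + 1 / a v (f v) else 0, by
            intro u v
            by_cases h : f u = f v
            · simp [h, add_comm]
            · have h' : ¬(f v = f u) := fun hh => h hh.symm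
              simp [h, h']⟩ e))
      ≤ ∑ e ∈ G.edgeFinset, Sym2.lift
          ⟨fun u v => 1 / (∑ j, a u j) + 1 / (∑ j, a v j), by
            intro u v; simp [add_comm]⟩ e := by
  simp_rw [mul_sum]
  rw [sum_comm]
  refine sum_le_sum fun e he => ?_
  induction e using Sym2.ind with
  | _ u v =>
    simp only [Sym2.lift_mk]
    exact sum_prod_mul_ite_eq_le a ha hA (SimpleGraph.mem_edgeFinset.1 he).ne
end

section
/- Let G = (V, E) be a finite simple graph with m edges and maximum degree at most Δ, let q ≥ 1 be an integer, and let (X_v)_{v ∈ V} be 4-wise independent uniform random variables taking values in [q]. Let D = |{ {u,v} ∈ E : X_u = X_v }| be the number of monochromatic edges. Then E[D] = m/q and Var[D] ≤ m·Δ/q² + m/q. -/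
/-!
Write `A e` for the event that the edge `e` is monochromatic. For two distinct edges `e ≠ f`
the event `A e ∩ A f` only involves the at most four endpoints, so 4-wise uniformity computes
it by counting colourings: if `e` and `f` share a vertex it says that three vertices get the same
colour (`q · q⁻³`), otherwise that two disjoint pairs are each monochromatic (`q² · q⁻⁴`). Either
way `P(A e ∩ A f) = q⁻² = P(A e) P(A f)`, so `D = ∑ₑ 1_{A e}` is a sum of `m` pairwise independent
indicators of probability `1/q`. Hence `E[D] = m/q` and `Var D = ∑ₑ Var 1_{A e} ≤ m/q`.
-/

open MeasureTheory ProbabilityTheory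

lemma pow_mul_inv_pow_of_lt {K : Type*} [DivisionRing K] (a : K) {m n : ℕ} (hmn : m < n) :
    a ^ m * a⁻¹ ^ n = a⁻¹ ^ (n - m) := by
  obtain ⟨k, rfl⟩ := Nat.exists_eq_add_of_le hmn.le
  rcases eq_or_ne a 0 with rfl | ha
  · simp [zero_pow (Nat.ne_zero_of_lt hmn), show k ≠ 0 by omega]
  · rw [pow_add, ← mul_assoc, inv_pow, mul_inv_cancel₀ (pow_ne_zero m ha), one_mul,
      Nat.add_sub_cancel_left]

namespace ProbabilityTheory

variable {Ω : Type*} [MeasurableSpace Ω] {μ : Measure Ω} {A B : Set Ω}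

lemma IndepSet.indepFun_indicator_one (h : IndepSet A B μ) :
    A.indicator (1 : Ω → ℝ) ⟂ᵢ[μ] B.indicator (1 : Ω → ℝ) := by
  have hle : ∀ C : Set Ω, MeasurableSpace.comap (C.indicator (1 : Ω → ℝ)) inferInstance ≤
      MeasurableSpace.generateFrom {C} := fun C =>
    (Measurable.indicator (m := MeasurableSpace.generateFrom {C}) (f := 1) measurable_const
      (MeasurableSpace.measurableSet_generateFrom (Set.mem_singleton C))).comap_le
  rw [IndepFun_iff_Indep]
  rw [IndepSet_iff_Indep] at h
  exact indep_of_indep_of_le_right (indep_of_indep_of_le_left h (hle A)) (hle B)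

lemma variance_indicator_one_le [IsProbabilityMeasure μ] (hA : MeasurableSet A) :
    variance (A.indicator (1 : Ω → ℝ)) μ ≤ μ.real A :=
  calc variance (A.indicator (1 : Ω → ℝ)) μ ≤ μ[A.indicator 1 ^ 2] :=
        variance_le_expectation_sq (aestronglyMeasurable_const.indicator hA)
    _ = μ.real A := by
        rw [← integral_indicator_one hA]
        congr 1
        ext ω
        by_cases h : ω ∈ A <;> simp [h]

end ProbabilityTheory

lemma Sym2.card_toFinset_union_eq_three {V : Type*} [DecidableEq V] {e f : Sym2 V}
    (he : ¬e.IsDiag) (hf : ¬f.IsDiag) (hef : e ≠ f) (hmeet : ¬Disjoint e.toFinset f.toFinset) :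
    (e.toFinset ∪ f.toFinset).card = 3 := by
  have hsum := Finset.card_union_add_card_inter e.toFinset f.toFinset
  rw [Sym2.card_toFinset_of_not_isDiag e he, Sym2.card_toFinset_of_not_isDiag f hf] at hsum
  have hpos : 0 < (e.toFinset ∩ f.toFinset).card :=
    Finset.card_pos.2 (Finset.not_disjoint_iff_nonempty_inter.1 hmeet)
  have hlt : (e.toFinset ∩ f.toFinset).card < 2 := by
    by_contra! h2
    have hinter_e : e.toFinset ∩ f.toFinset = e.toFinset :=
      Finset.eq_of_subset_of_card_le Finset.inter_subset_left
        (by rwa [Sym2.card_toFinset_of_not_isDiag e he])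
    have hinter_f : e.toFinset ∩ f.toFinset = f.toFinset :=
      Finset.eq_of_subset_of_card_le Finset.inter_subset_right
        (by rwa [Sym2.card_toFinset_of_not_isDiag f hf])
    exact hef (Sym2.ext fun x => by
      rw [← Sym2.mem_toFinset, ← Sym2.mem_toFinset, ← hinter_e, hinter_f])
  omega

section KWiseUniform

variable {V Ω : Type*} {q k : ℕ} {X : V → Ω → Fin q}

def IsKWiseUniform [MeasurableSpace Ω] (μ : Measure Ω) (X : V → Ω → Fin q) (k : ℕ) : Prop :=
  ∀ S : Finset V, S.card ≤ k → ∀ b : V → Fin q,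
    μ {ω | ∀ v ∈ S, X v ω = b v} = ((q : ENNReal))⁻¹ ^ S.card

def monochromaticEvent (X : V → Ω → Fin q) (S : Finset V) : Set Ω :=
  {ω | ∃ c, ∀ v ∈ S, X v ω = c}

lemma monochromaticEvent_inter_of_not_disjoint [DecidableEq V] {S T : Finset V}
    (hST : ¬Disjoint S T) :
    monochromaticEvent X S ∩ monochromaticEvent X T = monochromaticEvent X (S ∪ T) := by
  obtain ⟨w, hwS, hwT⟩ := Finset.not_disjoint_iff.1 hST
  ext ω
  simp only [monochromaticEvent, Set.mem_inter_iff, Set.mem_ofPred_eq, Finset.mem_union]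
  constructor
  · rintro ⟨⟨c, hc⟩, ⟨d, hd⟩⟩
    have hcd : c = d := (hc w hwS).symm.trans (hd w hwT)
    exact ⟨c, fun v hv => hv.elim (hc v) (hcd ▸ hd v)⟩
  · rintro ⟨c, hc⟩
    exact ⟨⟨c, fun v hv => hc v (.inl hv)⟩, ⟨c, fun v hv => hc v (.inr hv)⟩⟩

lemma Sym2.lift_ite_eq_indicator_monochromaticEvent [DecidableEq V] (ω : Ω)
    (hsymm : ∀ u v, (if X u ω = X v ω then (1 : ℝ) else 0) = if X v ω = X u ω then 1 else 0)
    (e : Sym2 V) :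
    Sym2.lift ⟨fun u v => if X u ω = X v ω then (1 : ℝ) else 0, hsymm⟩ e =
      (monochromaticEvent X e.toFinset).indicator 1 ω := by
  induction e using Sym2.ind with
  | _ u v =>
    by_cases h : X u ω = X v ω
    · simp [monochromaticEvent, h]
    · simp [monochromaticEvent, h, Ne.symm h]

variable [MeasurableSpace Ω] {μ : Measure Ω}

lemma IsKWiseUniform.mono (h : IsKWiseUniform μ X k) {l : ℕ} (hlk : l ≤ k) :
    IsKWiseUniform μ X l :=
  fun S hS => h S (hS.trans hlk)

lemma measurableSet_setOf_forall_mem_eq (hX : ∀ v, Measurable (X v)) (S : Finset V)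
    (b : V → Fin q) : MeasurableSet {ω | ∀ v ∈ S, X v ω = b v} := by
  simp only [Set.ofPred_forall]
  exact .biInter S.countable_toSet fun v _ => measurableSet_eq_fun (hX v) measurable_const

lemma measurableSet_monochromaticEvent (hX : ∀ v, Measurable (X v)) (S : Finset V) :
    MeasurableSet (monochromaticEvent X S) := by
  simp only [monochromaticEvent, Set.ofPred_exists]
  exact .iUnion fun c => measurableSet_setOf_forall_mem_eq hX S fun _ => c

lemma IsKWiseUniform.measureReal_eq (h : IsKWiseUniform μ X k) {S : Finset V} (hS : S.card ≤ k)
    (b : V → Fin q) : μ.real {ω | ∀ v ∈ S, X v ω = b v} = (q : ℝ)⁻¹ ^ S.card := by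
  simp [measureReal_def, h S hS b]

lemma IsKWiseUniform.measureReal_monochromaticEvent [IsFiniteMeasure μ]
    (h : IsKWiseUniform μ X k) (hX : ∀ v, Measurable (X v)) {S : Finset V} (hS : S.Nonempty)
    (hSk : S.card ≤ k) :
    μ.real (monochromaticEvent X S) = q * (q : ℝ)⁻¹ ^ S.card := by
  obtain ⟨w, hw⟩ := hS
  have hunion : monochromaticEvent X S = ⋃ c : Fin q, {ω | ∀ v ∈ S, X v ω = c} := by
    ext ω
    simp [monochromaticEvent]
  rw [hunion, measureReal_iUnion_fintype _ fun c => measurableSet_setOf_forall_mem_eq hX S _]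
  · simp [h.measureReal_eq hSk]
  · intro c d hcd
    exact Set.disjoint_left.2 fun ω hc hd => hcd ((hc w hw).symm.trans (hd w hw))

lemma IsKWiseUniform.measureReal_monochromaticEvent_inter [DecidableEq V] [IsFiniteMeasure μ]
    (h : IsKWiseUniform μ X k) (hX : ∀ v, Measurable (X v)) {S T : Finset V} (hS : S.Nonempty)
    (hT : T.Nonempty) (hST : Disjoint S T) (hk : S.card + T.card ≤ k) :
    μ.real (monochromaticEvent X S ∩ monochromaticEvent X T) =
      q ^ 2 * (q : ℝ)⁻¹ ^ (S.card + T.card) := by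
  obtain ⟨s, hs⟩ := hS
  obtain ⟨t, ht⟩ := hT
  let colouring (c : Fin q × Fin q) (v : V) : Fin q := if v ∈ S then c.1 else c.2
  have hunion : monochromaticEvent X S ∩ monochromaticEvent X T =
      ⋃ c : Fin q × Fin q, {ω | ∀ v ∈ S ∪ T, X v ω = colouring c v} := by
    ext ω
    simp only [monochromaticEvent, Set.mem_inter_iff, Set.mem_ofPred_eq, Set.mem_iUnion,
      Finset.mem_union, colouring]
    constructor
    · rintro ⟨⟨c, hc⟩, ⟨d, hd⟩⟩
      refine ⟨(c, d), fun v hv => ?_⟩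
      by_cases hvS : v ∈ S
      · simp [hvS, hc v hvS]
      · simp [hvS, hd v (hv.resolve_left hvS)]
    · rintro ⟨c, hc⟩
      exact ⟨⟨c.1, fun v hv => by simpa [hv] using hc v (.inl hv)⟩,
        ⟨c.2, fun v hv => by simpa [Finset.disjoint_right.1 hST hv] using hc v (.inr hv)⟩⟩
  rw [hunion, measureReal_iUnion_fintype _ fun c => measurableSet_setOf_forall_mem_eq hX _ _]
  · have hcard : (S ∪ T).card = S.card + T.card := Finset.card_union_of_disjoint hST
    simp only [h.measureReal_eq (hcard ▸ hk), hcard, Finset.sum_const, Finset.card_univ,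
      Fintype.card_prod, Fintype.card_fin, nsmul_eq_mul]
    push_cast
    ring
  · intro c d hcd
    refine Set.disjoint_left.2 fun ω hc hd => hcd (Prod.ext ?_ ?_)
    · simpa [colouring, hs] using (hc s (by simp [hs])).symm.trans (hd s (by simp [hs]))
    · simpa [colouring, Finset.disjoint_right.1 hST ht] using
        (hc t (by simp [ht])).symm.trans (hd t (by simp [ht]))

lemma IsKWiseUniform.measureReal_monochromaticEvent_edge [DecidableEq V] [IsFiniteMeasure μ]
    (h : IsKWiseUniform μ X 2) (hX : ∀ v, Measurable (X v)) {e : Sym2 V} (he : ¬e.IsDiag) :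
    μ.real (monochromaticEvent X e.toFinset) = (q : ℝ)⁻¹ := by
  have hcard := Sym2.card_toFinset_of_not_isDiag e he
  rw [h.measureReal_monochromaticEvent hX (Finset.card_pos.1 (by omega)) hcard.le, hcard]
  simpa using pow_mul_inv_pow_of_lt (q : ℝ) one_lt_two

lemma IsKWiseUniform.indepSet_monochromaticEvent_edges [DecidableEq V] [IsProbabilityMeasure μ]
    (h : IsKWiseUniform μ X 4) (hX : ∀ v, Measurable (X v)) {e f : Sym2 V} (he : ¬e.IsDiag)
    (hf : ¬f.IsDiag) (hef : e ≠ f) :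
    IndepSet (monochromaticEvent X e.toFinset) (monochromaticEvent X f.toFinset) μ := by
  have hcard_e := Sym2.card_toFinset_of_not_isDiag e he
  have hcard_f := Sym2.card_toFinset_of_not_isDiag f hf
  have hinter : μ.real (monochromaticEvent X e.toFinset ∩ monochromaticEvent X f.toFinset) =
      (q : ℝ)⁻¹ ^ 2 := by
    by_cases hmeet : Disjoint e.toFinset f.toFinset
    · rw [h.measureReal_monochromaticEvent_inter hX (Finset.card_pos.1 (by omega))
        (Finset.card_pos.1 (by omega)) hmeet (by omega), hcard_e, hcard_f]
      exact pow_mul_inv_pow_of_lt _ (by norm_num)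
    · have hcard := Sym2.card_toFinset_union_eq_three he hf hef hmeet
      rw [monochromaticEvent_inter_of_not_disjoint hmeet,
        h.measureReal_monochromaticEvent hX (Finset.card_pos.1 (by omega)) (by omega), hcard]
      simpa using pow_mul_inv_pow_of_lt (q : ℝ) (by norm_num : 1 < 3)
  have h2 : IsKWiseUniform μ X 2 := h.mono (by norm_num)
  rw [indepSet_iff_measure_inter_eq_mul (measurableSet_monochromaticEvent hX _)
    (measurableSet_monochromaticEvent hX _) μ, ← ENNReal.toReal_eq_toReal_iff' (measure_ne_top _ _)
    (ENNReal.mul_ne_top (measure_ne_top _ _) (measure_ne_top _ _)), ENNReal.toReal_mul]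
  simp only [← measureReal_def, hinter, h2.measureReal_monochromaticEvent_edge hX he,
    h2.measureReal_monochromaticEvent_edge hX hf, sq]

end KWiseUniform

/-- The moment computations inside the proof of Lemma 4.7: if `(X_v)` are 4-wise independent
uniform random variables with values in `[q]` and `D` is the number of monochromatic edges of
a graph `G` with `m` edges and maximum degree at most `Δ`, then `E[D] = m/q` and
`Var[D] ≤ m·Δ/q² + m/q`. -/
theorem fourwise_monochromatic_moments {V : Type*} [Fintype V] [DecidableEq V]
    (G : SimpleGraph V) [DecidableRel G.Adj] (Δ q : ℕ)
    {Ω : Type*} [MeasurableSpace Ω] (μ : Measure Ω) [IsProbabilityMeasure μ]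
    (X : V → Ω → Fin q) (hmeas : ∀ v, Measurable (X v))
    (hindep : ∀ S : Finset V, S.card ≤ 4 → ∀ b : V → Fin q,
      μ {ω | ∀ v ∈ S, X v ω = b v} = ((q : ENNReal))⁻¹ ^ S.card)
    (D : Ω → ℝ)
    (hD : ∀ ω, D ω = ∑ e ∈ G.edgeFinset, Sym2.lift
      ⟨fun u v => if X u ω = X v ω then (1 : ℝ) else 0, by
        intro u v
        by_cases h : X u ω = X v ω
        · simp [h]
        · have h' : ¬(X v ω = X u ω) := fun hh => h hh.symm
          simp [h, h']⟩ e) :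
    (∫ ω, D ω ∂μ) = (G.edgeFinset.card : ℝ) / q ∧
    variance D μ ≤ (G.edgeFinset.card : ℝ) * Δ / q ^ 2 + (G.edgeFinset.card : ℝ) / q := by
  have huniform : IsKWiseUniform μ X 4 := hindep
  set A : Sym2 V → Set Ω := fun e => monochromaticEvent X e.toFinset
  have hD_sum : D = ∑ e ∈ G.edgeFinset, (A e).indicator 1 := by
    ext ω
    simp only [hD ω, Finset.sum_apply, Sym2.lift_ite_eq_indicator_monochromaticEvent, A]
  have hA : ∀ e, MeasurableSet (A e) := fun e => measurableSet_monochromaticEvent hmeas _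
  have hnotDiag : ∀ e ∈ G.edgeFinset, ¬e.IsDiag := fun e he =>
    G.not_isDiag_of_mem_edgeSet (SimpleGraph.mem_edgeFinset.1 he)
  have hprob : ∀ e ∈ G.edgeFinset, μ.real (A e) = (q : ℝ)⁻¹ := fun e he =>
    (huniform.mono (by norm_num)).measureReal_monochromaticEvent_edge hmeas (hnotDiag e he)
  have hsum_prob : ∑ e ∈ G.edgeFinset, μ.real (A e) = (G.edgeFinset.card : ℝ) / q := by
    simp [Finset.sum_congr rfl hprob, div_eq_mul_inv]
  refine ⟨?_, ?_⟩
  · rw [hD_sum, ← hsum_prob]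
    simp only [Finset.sum_apply]
    rw [integral_finsetSum _ fun e _ => (integrable_const 1).indicator (hA e)]
    simp only [integral_indicator_one (hA _)]
  · calc variance D μ = ∑ e ∈ G.edgeFinset, variance ((A e).indicator 1) μ := by
          rw [hD_sum]
          refine IndepFun.variance_sum (fun e _ => (memLp_const 1).indicator (hA e)) ?_
          intro e he f hf hef
          exact (huniform.indepSet_monochromaticEvent_edges hmeas (hnotDiag e he)
            (hnotDiag f hf) hef).indepFun_indicator_one
      _ ≤ ∑ e ∈ G.edgeFinset, μ.real (A e) :=
          Finset.sum_le_sum fun e _ => variance_indicator_one_le (hA e)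
      _ ≤ _ := hsum_prob ▸ le_add_of_nonneg_left (by positivity)
end

section
/- Let G = (V, E) be a finite simple graph on n vertices with maximum degree at most Δ, where Δ ≤ n, and let ℓ be an integer with Δ/2 < ℓ ≤ Δ. Let (X_v)_{v ∈ V} be 4-wise independent uniform random variables taking values in [ℓ²], and let D = |{ {u,v} ∈ E : X_u = X_v }|. Then Pr[ D ≥ 7n/Δ ] ≤ 1/2. -/
/-!
Markov's inequality already suffices. Pairwise independence makes each edge monochromatic with
probability `1/ℓ² < 4/Δ²`, and the graph has at most `nΔ/2` edges, so `E[D] ≤ 2n/Δ` and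
`Pr[D ≥ 7n/Δ] ≤ 2/7`.
-/

open MeasureTheory Finset
open scoped ENNReal

namespace Sym2

variable {V α : Type*} [DecidableEq α]

def monochromaticIndicator (x : V → α) : Sym2 V → ℝ :=
  Sym2.lift ⟨fun u v => if x u = x v then 1 else 0, fun u v => by simp only [eq_comm]⟩

@[simp]
theorem monochromaticIndicator_mk (x : V → α) (u v : V) :
    monochromaticIndicator x s(u, v) = if x u = x v then 1 else 0 :=
  rfl

theorem monochromaticIndicator_nonneg (x : V → α) (e : Sym2 V) :
    0 ≤ monochromaticIndicator x e := by
  induction e with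
  | h u v => rw [monochromaticIndicator_mk]; positivity

end Sym2

namespace SimpleGraph

variable {V : Type*} [Fintype V] (G : SimpleGraph V) [DecidableRel G.Adj]

theorem two_mul_card_edgeFinset_le {Δ : ℕ} (hdeg : ∀ v, G.degree v ≤ Δ) :
    2 * #G.edgeFinset ≤ Fintype.card V * Δ := by
  rw [← G.sum_degrees_eq_twice_card_edges]
  simpa using Finset.sum_le_sum fun v (_ : v ∈ univ) => hdeg v

theorem card_edgeFinset_mul_inv_sq_le {Δ ℓ : ℕ} (hdeg : ∀ v, G.degree v ≤ Δ) (hΔ : 0 < Δ)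
    (hℓ : (Δ : ℝ) / 2 < ℓ) :
    (#G.edgeFinset : ℝ) * ((ℓ : ℝ) ^ 2)⁻¹ ≤ 2 * Fintype.card V / Δ := by
  have hedges : (2 * #G.edgeFinset : ℝ) ≤ Fintype.card V * Δ := by
    exact_mod_cast G.two_mul_card_edgeFinset_le hdeg
  have hΔR : (0 : ℝ) < Δ := by exact_mod_cast hΔ
  calc (#G.edgeFinset : ℝ) * ((ℓ : ℝ) ^ 2)⁻¹
      ≤ (Fintype.card V * Δ / 2) * (((Δ : ℝ) / 2) ^ 2)⁻¹ := by
        gcongr; linarith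
    _ = 2 * Fintype.card V / Δ := by field_simp

end SimpleGraph

section Collision

variable {Ω α : Type*} [MeasurableSpace Ω] {μ : Measure Ω}
  [Fintype α] [MeasurableSpace α] [MeasurableSingletonClass α] {X Y : Ω → α}

theorem measure_eq_eq_sum (hX : Measurable X) (hY : Measurable Y) :
    μ {ω | X ω = Y ω} = ∑ b, μ {ω | X ω = b ∧ Y ω = b} := by
  have hunion : {ω | X ω = Y ω} = ⋃ b, {ω | X ω = b ∧ Y ω = b} := by
    ext ω
    simp only [Set.mem_ofPred_eq, Set.mem_iUnion]
    exact ⟨fun h => ⟨Y ω, h, rfl⟩, fun ⟨b, hXb, hYb⟩ => hXb.trans hYb.symm⟩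
  rw [hunion, measure_iUnion, tsum_fintype]
  · exact fun b b' hbb' => Set.disjoint_left.2 fun ω h h' => hbb' (h.1.symm.trans h'.1)
  · exact fun b => (hX (measurableSet_singleton b)).inter (hY (measurableSet_singleton b))

theorem measure_eq_eq_inv_card [Nonempty α] (hX : Measurable X) (hY : Measurable Y)
    (huniform : ∀ b, μ {ω | X ω = b ∧ Y ω = b} = (Fintype.card α : ℝ≥0∞)⁻¹ ^ 2) :
    μ {ω | X ω = Y ω} = (Fintype.card α : ℝ≥0∞)⁻¹ := by
  rw [measure_eq_eq_sum hX hY]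
  simp only [huniform, sum_const, card_univ, nsmul_eq_mul, pow_two, ← mul_assoc]
  rw [ENNReal.mul_inv_cancel (by simp) (by simp), one_mul]

theorem measure_eq_eq_inv_card_of_pairwise [Nonempty α] {V : Type*} {X : V → Ω → α}
    (hX : ∀ v, Measurable (X v))
    (huniform : ∀ S : Finset V, #S ≤ 2 → ∀ b : V → α,
      μ {ω | ∀ v ∈ S, X v ω = b v} = (Fintype.card α : ℝ≥0∞)⁻¹ ^ #S)
    {u v : V} (huv : u ≠ v) :
    μ {ω | X u ω = X v ω} = (Fintype.card α : ℝ≥0∞)⁻¹ := by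
  classical
  refine measure_eq_eq_inv_card (hX u) (hX v) fun b => ?_
  simpa [card_pair huv] using huniform {u, v} card_le_two fun _ => b

end Collision

section MonochromaticEdges

variable {Ω V α : Type*} [DecidableEq α] {X : V → Ω → α}

theorem monochromaticIndicator_mk_eq_indicator (u v : V) :
    (fun ω => Sym2.monochromaticIndicator (fun v => X v ω) s(u, v)) =
      {ω | X u ω = X v ω}.indicator 1 := by
  ext ω
  simp [Set.indicator_apply]

variable [MeasurableSpace Ω] {μ : Measure Ω} [MeasurableSpace α] [MeasurableEq α]

theorem integral_monochromaticIndicator (hX : ∀ v, Measurable (X v)) (u v : V) :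
    ∫ ω, Sym2.monochromaticIndicator (fun v => X v ω) s(u, v) ∂μ =
      μ.real {ω | X u ω = X v ω} := by
  rw [monochromaticIndicator_mk_eq_indicator]
  exact integral_indicator_one (measurableSet_eq_fun (hX u) (hX v))

variable [IsFiniteMeasure μ]

theorem integrable_monochromaticIndicator (hX : ∀ v, Measurable (X v)) (e : Sym2 V) :
    Integrable (fun ω => Sym2.monochromaticIndicator (fun v => X v ω) e) μ := by
  induction e with
  | h u v =>
    rw [monochromaticIndicator_mk_eq_indicator]
    exact (integrable_const 1).indicator (measurableSet_eq_fun (hX u) (hX v))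

theorem integral_sum_monochromaticIndicator (hX : ∀ v, Measurable (X v)) {p : ℝ≥0∞}
    (hpair : ∀ u v, u ≠ v → μ {ω | X u ω = X v ω} = p)
    (E : Finset (Sym2 V)) (hE : ∀ e ∈ E, ¬e.IsDiag) :
    ∫ ω, ∑ e ∈ E, Sym2.monochromaticIndicator (fun v => X v ω) e ∂μ = #E * p.toReal := by
  rw [integral_finsetSum _ fun e _ => integrable_monochromaticIndicator hX e]
  rw [sum_congr rfl fun e he => ?_, sum_const, nsmul_eq_mul]
  induction e with
  | h u v =>
    rw [integral_monochromaticIndicator hX, measureReal_def, hpair u v (by simpa using hE _ he)]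

end MonochromaticEdges

theorem measure_ge_le_ofReal_of_integral_le {Ω : Type*} [MeasurableSpace Ω] {μ : Measure Ω}
    [IsFiniteMeasure μ] {f : Ω → ℝ} (hf_nonneg : 0 ≤ᵐ[μ] f) (hf_int : Integrable f μ) {t c : ℝ}
    (ht : 0 < t) (hc : ∫ ω, f ω ∂μ ≤ c * t) :
    μ {ω | t ≤ f ω} ≤ ENNReal.ofReal c := by
  rw [← ofReal_measureReal]
  refine ENNReal.ofReal_le_ofReal (le_of_mul_le_mul_left ?_ ht)
  rw [mul_comm t c]
  exact (mul_meas_ge_le_integral_of_nonneg hf_nonneg hf_int t).trans hc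

/-- Equation (4.1) inside the proof of Lemma 4.7: for a graph on `n` vertices with maximum
degree at most `Δ ≤ n`, an integer `ℓ` with `Δ/2 < ℓ ≤ Δ`, and 4-wise independent uniform
random variables `(X_v)` with values in `[ℓ²]`, the number `D` of monochromatic edges
satisfies `Pr[D ≥ 7n/Δ] ≤ 1/2`. -/
theorem monochromatic_count_chebyshev {V : Type*} [Fintype V] [DecidableEq V]
    (G : SimpleGraph V) [DecidableRel G.Adj] (Δ ℓ : ℕ)
    (hΔn : Δ ≤ Fintype.card V) (hdeg : ∀ v, G.degree v ≤ Δ)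
    (hℓ1 : (Δ : ℝ) / 2 < (ℓ : ℝ)) (hℓ2 : ℓ ≤ Δ)
    {Ω : Type*} [MeasurableSpace Ω] (μ : Measure Ω) [IsProbabilityMeasure μ]
    (X : V → Ω → Fin (ℓ ^ 2)) (hmeas : ∀ v, Measurable (X v))
    (hindep : ∀ S : Finset V, S.card ≤ 4 → ∀ b : V → Fin (ℓ ^ 2),
      μ {ω | ∀ v ∈ S, X v ω = b v} = (((ℓ : ENNReal) ^ 2))⁻¹ ^ S.card)
    (D : Ω → ℝ)
    (hD : ∀ ω, D ω = ∑ e ∈ G.edgeFinset, Sym2.lift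
      ⟨fun u v => if X u ω = X v ω then (1 : ℝ) else 0, by
        intro u v
        by_cases h : X u ω = X v ω
        · simp [h]
        · have h' : ¬(X v ω = X u ω) := fun hh => h hh.symm
          simp [h, h']⟩ e) :
    μ {ω | 7 * (Fintype.card V : ℝ) / Δ ≤ D ω} ≤ 1 / 2 := by
  have hℓ : 0 < ℓ := by exact_mod_cast (by positivity : (0 : ℝ) ≤ Δ / 2).trans_lt hℓ1
  have hΔ : 0 < Δ := hℓ.trans_le hℓ2
  have hn : 0 < Fintype.card V := hΔ.trans_le hΔn
  have : Nonempty (Fin (ℓ ^ 2)) := ⟨⟨0, by positivity⟩⟩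
  have hpair : ∀ u v, u ≠ v →
      μ {ω | X u ω = X v ω} = (Fintype.card (Fin (ℓ ^ 2)) : ℝ≥0∞)⁻¹ :=
    fun u v => measure_eq_eq_inv_card_of_pairwise hmeas
      fun S hS b => by simpa using hindep S (by omega) b
  have hD' : D = fun ω => ∑ e ∈ G.edgeFinset, Sym2.monochromaticIndicator (fun v => X v ω) e :=
    funext hD
  have hE : ∫ ω, D ω ∂μ ≤ 2 / 7 * (7 * Fintype.card V / Δ) := by
    rw [hD', integral_sum_monochromaticIndicator hmeas hpair _
      fun e he => G.not_isDiag_of_mem_edgeSet (G.mem_edgeFinset.1 he)]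
    convert G.card_edgeFinset_mul_inv_sq_le hdeg hΔ hℓ1 using 1
    · simp
    · ring
  calc μ {ω | 7 * (Fintype.card V : ℝ) / Δ ≤ D ω}
      ≤ ENNReal.ofReal (2 / 7) := measure_ge_le_ofReal_of_integral_le
        (ae_of_all _ fun ω => (hD ω).symm ▸ sum_nonneg fun e _ =>
          Sym2.monochromaticIndicator_nonneg _ e)
        (hD' ▸ integrable_finsetSum _ fun e _ => integrable_monochromaticIndicator hmeas e)
        (by positivity) hE
    _ ≤ 1 / 2 := by rw [ENNReal.ofReal_le_iff_le_toReal (by simp)]; norm_num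
end
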